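/- Let L ⊂ M_n(ℂ) be a rank-2n lattice of diagonal matrices (a diagonal number field code) with the property that |det(X X*)| ≥ 1 for every nonzero X ∈ L, and such that for every m ≥ 1 there is a constant K with ∑_{X ∈ L, 0 < ‖X‖_F ≤ M} |det(X X*)|^{−m} ≤ K (log M)^{3n−1} for all M ≥ 2. Then for every real m > 1 there is a constant K' such that for all c ≥ 1 and all M, ∑_{X ∈ L, 0 < ‖X‖_F ≤ M} det(I + c X X*)^{−m} ≤ K' c^{−nm+1}. -/

import Mathlib

open Matrix

/-- The Frobenius norm of a complex matrix. -/
noncomputable def frobNorm {n T : ℕ} (X : Matrix (Fin n) (Fin T) ℂ) : ℝ :=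
  Real.sqrt (((X * Xᴴ).trace).re)

/-!
For diagonal `X` write `λᵢ = |Xᵢᵢ|²`, so that `D := det (1 + c XXᴴ) = ∏ (1 + c λᵢ)` and
`∏ λᵢ = |det XXᴴ| ≥ 1`. Expanding `D` around the smallest `λⱼ` gives `D ≥ cⁿ ∏ λᵢ` and
`D ≥ cⁿ⁻¹ (Q + ∏ λᵢ)` with `Q = ∏_{i ≠ j} λᵢ`, and `(Q + ∏ λᵢ)ⁿ` dominates every `λᵢ`; hence
`‖X‖_F² ≤ n (D / cⁿ⁻¹)ⁿ`. Interpolating the two bounds with weights `m - a` and `a` yields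
`D^(-m) ≤ c^(1-nm) |det XXᴴ|^(-(m-a)) (n / ‖X‖_F²)^(a/n)`. The factor `|det XXᴴ|^(-(m-a))` has
partial sums of polylogarithmic growth, while the weight `‖X‖_F^(-2a/n)` decays geometrically over
the dyadic shells `2ᵏ ≤ ‖X‖_F ≤ 2ᵏ⁺¹`; summing shell by shell bounds the whole sum independently
of `M` and `c`.
-/

open Finset

lemma Set.Finite.inter_span_int_of_linearIndependent {E ι : Type*} [NormedAddCommGroup E]
    [NormedSpace ℝ E] [FiniteDimensional ℝ E] {b : ι → E} (hb : LinearIndependent ℝ b)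
    {s : Set E} (hs : Bornology.IsBounded s) :
    (s ∩ Submodule.span ℤ (Set.range b)).Finite := by
  have hind := (linearIndepOn_id_range_iff hb.injective).mpr hb
  refine (ZSpan.setFinite_inter (Module.Basis.extend hind) hs).subset
    (Set.inter_subset_inter_right _ (Submodule.span_mono ?_))
  rw [Module.Basis.range_extend]
  exact hind.subset_extend _

section Frobenius

attribute [local instance] Matrix.frobeniusNormedAddCommGroup Matrix.frobeniusNormedSpace

lemma frobNorm_eq_norm {n T : ℕ} (X : Matrix (Fin n) (Fin T) ℂ) : frobNorm X = ‖X‖ := by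
  rw [frobenius_norm_def, frobNorm, Real.sqrt_eq_rpow, trace, Complex.re_sum]
  congr 1
  refine sum_congr rfl fun i _ => ?_
  rw [diag_apply, mul_apply, Complex.re_sum]
  refine sum_congr rfl fun j _ => ?_
  rw [conjTranspose_apply, Real.rpow_two, ← Complex.normSq_eq_norm_sq]
  exact congrArg Complex.re (Complex.mul_conj (X i j))

lemma finite_setOf_mem_span_int_frobNorm_le {n T : ℕ} {ι : Type*}
    {b : ι → Matrix (Fin n) (Fin T) ℂ} (hb : LinearIndependent ℝ b) (M : ℝ) :
    {X | X ∈ Submodule.span ℤ (Set.range b) ∧ frobNorm X ≤ M}.Finite := by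
  refine (Set.Finite.inter_span_int_of_linearIndependent hb
    (Metric.isBounded_closedBall (x := 0) (r := M))).subset fun X ⟨hXspan, hXM⟩ => ⟨?_, hXspan⟩
  rwa [mem_closedBall_zero_iff, ← frobNorm_eq_norm]

end Frobenius

lemma sum_le_tsum_subtype {β : Type*} {p : β → Prop} (hp : {x | p x}.Finite) {g : β → ℝ}
    (hg : ∀ x, p x → 0 ≤ g x) {s : Finset β} (hs : ∀ x ∈ s, p x) :
    ∑ x ∈ s, g x ≤ ∑' x : {x // p x}, g x := by
  classical
  have : Finite {x // p x} := hp.to_subtype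
  rw [← sum_subtype_of_mem g hs]
  exact Summable.of_finite.sum_le_tsum _ fun x _ => hg x x.2

lemma pow_log_floor_le_and_le_pow_succ {r : ℝ} (hr : 1 ≤ r) :
    (2 : ℝ) ^ Nat.log 2 ⌊r⌋₊ ≤ r ∧ r ≤ 2 ^ (Nat.log 2 ⌊r⌋₊ + 1) := by
  have hfloor : ⌊r⌋₊ ≠ 0 := (Nat.floor_pos.mpr hr).ne'
  constructor
  · calc (2 : ℝ) ^ Nat.log 2 ⌊r⌋₊ ≤ ⌊r⌋₊ := by exact_mod_cast Nat.pow_log_le_self 2 hfloor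
      _ ≤ r := Nat.floor_le (zero_le_one.trans hr)
  · calc r ≤ ⌊r⌋₊ + 1 := (Nat.lt_floor_add_one r).le
      _ ≤ 2 ^ (Nat.log 2 ⌊r⌋₊ + 1) := by exact_mod_cast Nat.lt_pow_succ_log_self one_lt_two _

lemma summable_geometric_mul_log_two_pow_succ_pow {ρ : ℝ} (h0 : 0 < ρ) (h1 : ρ < 1) (p : ℕ) :
    Summable fun k : ℕ => ρ ^ k * Real.log (2 ^ (k + 1)) ^ p := by
  have h := (summable_nat_add_iff (f := fun n : ℕ => (n : ℝ) ^ p * ρ ^ n) 1).mpr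
      (summable_pow_mul_geometric_of_norm_lt_one p (by rwa [Real.norm_of_nonneg h0.le]))
  refine (h.mul_left (Real.log 2 ^ p / ρ)).congr fun k => ?_
  rw [Real.log_pow, pow_succ, mul_pow]
  field_simp

noncomputable def dyadicLogSeries (δ : ℝ) (p : ℕ) : ℝ :=
  ∑' k : ℕ, ((2 : ℝ) ^ δ)⁻¹ ^ k * Real.log (2 ^ (k + 1)) ^ p

lemma dyadicLogSeries_nonneg (δ : ℝ) (p : ℕ) : 0 ≤ dyadicLogSeries δ p :=
  tsum_nonneg fun _ => mul_nonneg (by positivity)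
    (pow_nonneg (Real.log_nonneg (one_le_pow₀ one_le_two)) _)

lemma sum_mul_le_of_sum_le_mul_log_pow {α : Type*} (s : Finset α) {f w r : α → ℝ} {C δ K : ℝ}
    {p : ℕ} (hC : 0 ≤ C) (hδ : 0 < δ) (hK : 0 ≤ K) (hf : ∀ x ∈ s, 0 ≤ f x)
    (hr : ∀ x ∈ s, 1 ≤ r x) (hw : ∀ x ∈ s, w x ≤ C / r x ^ δ)
    (hpart : ∀ M : ℝ, 2 ≤ M → ∑ x ∈ s with r x ≤ M, f x ≤ K * Real.log M ^ p) :
    ∑ x ∈ s, f x * w x ≤ C * K * dyadicLogSeries δ p := by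
  classical
  set ρ := ((2 : ℝ) ^ δ)⁻¹
  have hρ0 : 0 < ρ := by positivity
  have hρ1 : ρ < 1 := inv_lt_one_of_one_lt₀ (Real.one_lt_rpow one_lt_two hδ)
  set shell : α → ℕ := fun x => Nat.log 2 ⌊r x⌋₊
  have hw_shell : ∀ x ∈ s, f x * w x ≤ C * ρ ^ shell x * f x := fun x hx => by
    have hlow := (pow_log_floor_le_and_le_pow_succ (hr x hx)).1
    have hρpow : C / r x ^ δ ≤ C * ρ ^ shell x := by
      rw [inv_pow, ← div_eq_mul_inv, Real.rpow_pow_comm zero_le_two]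
      gcongr
    nlinarith [hw x hx, hf x hx]
  have hfiber : ∀ k, ∑ x ∈ s with shell x = k, C * ρ ^ shell x * f x ≤
      C * K * (ρ ^ k * Real.log (2 ^ (k + 1)) ^ p) := fun k => by
    calc ∑ x ∈ s with shell x = k, C * ρ ^ shell x * f x
        = C * ρ ^ k * ∑ x ∈ s with shell x = k, f x := by
          rw [mul_sum]
          exact sum_congr rfl fun x hx => by rw [(mem_filter.mp hx).2]
      _ ≤ C * ρ ^ k * ∑ x ∈ s with r x ≤ 2 ^ (k + 1), f x := by
          refine mul_le_mul_of_nonneg_left (sum_le_sum_of_subset_of_nonneg (fun x hx => ?_)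
            fun x hx _ => hf x (mem_filter.mp hx).1) (by positivity)
          obtain ⟨hxs, rfl⟩ := mem_filter.mp hx
          exact mem_filter.mpr ⟨hxs, (pow_log_floor_le_and_le_pow_succ (hr x hxs)).2⟩
      _ ≤ C * ρ ^ k * (K * Real.log (2 ^ (k + 1)) ^ p) := by
          gcongr
          exact hpart _ (le_self_pow₀ one_le_two (Nat.succ_ne_zero k))
      _ = C * K * (ρ ^ k * Real.log (2 ^ (k + 1)) ^ p) := by ring
  have hmaps : ∀ x ∈ s, shell x ∈ range (s.sup shell + 1) := fun x hx =>
    mem_range.mpr (Nat.lt_succ_of_le (le_sup hx))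
  calc ∑ x ∈ s, f x * w x ≤ ∑ x ∈ s, C * ρ ^ shell x * f x := sum_le_sum hw_shell
    _ = ∑ k ∈ range (s.sup shell + 1), ∑ x ∈ s with shell x = k, C * ρ ^ shell x * f x :=
        (sum_fiberwise_of_maps_to hmaps _).symm
    _ ≤ ∑ k ∈ range (s.sup shell + 1), C * K * (ρ ^ k * Real.log (2 ^ (k + 1)) ^ p) :=
        sum_le_sum fun k _ => hfiber k
    _ ≤ C * K * ∑' k : ℕ, ρ ^ k * Real.log (2 ^ (k + 1)) ^ p := by
        rw [← mul_sum]
        gcongr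
        exact (summable_geometric_mul_log_two_pow_succ_pow hρ0 hρ1 p).sum_le_tsum _
          fun k _ => mul_nonneg (pow_nonneg hρ0.le _)
            (pow_nonneg (Real.log_nonneg (one_le_pow₀ one_le_two)) _)

section ProdOneAddMul

variable {ι : Type*} [Fintype ι] {l : ι → ℝ}

lemma one_le_sum_of_one_le_prod [Nonempty ι] (hl : ∀ k, 0 ≤ l k) (hP : 1 ≤ ∏ k, l k) :
    1 ≤ ∑ k, l k := by
  have hS : 0 ≤ ∑ k, l k := sum_nonneg fun k _ => hl k
  refine (one_le_pow_iff_of_nonneg hS (Fintype.card_ne_zero (α := ι))).mp (hP.trans ?_)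
  calc ∏ k, l k ≤ ∏ _k : ι, ∑ k, l k :=
        prod_le_prod (fun k _ => hl k) fun k _ => single_le_sum (fun k _ => hl k) (mem_univ k)
    _ = (∑ k, l k) ^ Fintype.card ι := by rw [prod_const, card_univ]

variable [DecidableEq ι]

lemma mul_pow_card_sub_one_le_prod (hl : ∀ k, 0 ≤ l k) (i : ι) {j : ι} (hj : ∀ k, l j ≤ l k) :
    l i * l j ^ (Fintype.card ι - 1) ≤ ∏ k, l k := by
  rw [← mul_prod_erase univ l (mem_univ i)]
  gcongr
  · exact hl i
  · calc l j ^ (Fintype.card ι - 1) = ∏ _k ∈ univ.erase i, l j := by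
          rw [prod_const, card_erase_of_mem (mem_univ i), card_univ]
      _ ≤ ∏ k ∈ univ.erase i, l k := prod_le_prod (fun _ _ => hl j) (fun k _ => hj k)

lemma le_prod_erase_add_prod_pow (hl : ∀ k, 0 ≤ l k) (hP : 1 ≤ ∏ k, l k) (i : ι) {j : ι}
    (hj : ∀ k, l j ≤ l k) :
    l i ≤ (∏ k ∈ univ.erase j, l k + ∏ k, l k) ^ Fintype.card ι := by
  set Q := ∏ k ∈ univ.erase j, l k
  set P := ∏ k, l k
  have hQ : 0 ≤ Q := prod_nonneg fun k _ => hl k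
  have hP_eq : l j * Q = P := mul_prod_erase univ l (mem_univ j)
  calc l i ≤ l i * P ^ (Fintype.card ι - 1) := le_mul_of_one_le_right (hl i) (one_le_pow₀ hP)
    _ = l i * l j ^ (Fintype.card ι - 1) * Q ^ (Fintype.card ι - 1) := by
        rw [← hP_eq, mul_pow, mul_assoc]
    _ ≤ P * Q ^ (Fintype.card ι - 1) := by
        gcongr
        exact mul_pow_card_sub_one_le_prod hl i hj
    _ ≤ (Q + P) * (Q + P) ^ (Fintype.card ι - 1) := by
        gcongr <;> linarith
    _ = (Q + P) ^ Fintype.card ι := by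
        rw [← pow_succ', Nat.sub_add_cancel (Fintype.card_pos_iff.mpr ⟨i⟩)]

lemma pow_mul_prod_erase_add_pow_mul_prod_le (hl : ∀ k, 0 ≤ l k) {c : ℝ} (hc : 0 ≤ c) (j : ι) :
    c ^ (Fintype.card ι - 1) * ∏ k ∈ univ.erase j, l k + c ^ Fintype.card ι * ∏ k, l k ≤
      ∏ k, (1 + c * l k) := by
  have hprod :
      ∏ k ∈ univ.erase j, c * l k = c ^ (Fintype.card ι - 1) * ∏ k ∈ univ.erase j, l k := by
    rw [prod_mul_distrib, prod_const, card_erase_of_mem (mem_univ j), card_univ]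
  have hpow : c ^ Fintype.card ι = c ^ (Fintype.card ι - 1) * c := by
    rw [← pow_succ, Nat.sub_add_cancel (Fintype.card_pos_iff.mpr ⟨j⟩)]
  have hj : 0 ≤ 1 + c * l j := by nlinarith [hl j]
  calc c ^ (Fintype.card ι - 1) * ∏ k ∈ univ.erase j, l k + c ^ Fintype.card ι * ∏ k, l k
      = (1 + c * l j) * ∏ k ∈ univ.erase j, c * l k := by
        rw [hprod, ← mul_prod_erase univ l (mem_univ j), hpow]
        ring
    _ ≤ (1 + c * l j) * ∏ k ∈ univ.erase j, (1 + c * l k) :=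
        mul_le_mul_of_nonneg_left
          (prod_le_prod (fun k _ => mul_nonneg hc (hl k)) fun k _ => by linarith) hj
    _ = ∏ k, (1 + c * l k) := mul_prod_erase univ (fun k => 1 + c * l k) (mem_univ j)

lemma pow_card_mul_prod_le_prod_one_add_mul [Nonempty ι] (hl : ∀ k, 0 ≤ l k) {c : ℝ}
    (hc : 0 ≤ c) : c ^ Fintype.card ι * ∏ k, l k ≤ ∏ k, (1 + c * l k) := by
  obtain ⟨j⟩ := ‹Nonempty ι›
  refine le_trans ?_ (pow_mul_prod_erase_add_pow_mul_prod_le hl hc j)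
  have : 0 ≤ c ^ (Fintype.card ι - 1) * ∏ k ∈ univ.erase j, l k :=
    mul_nonneg (pow_nonneg hc _) (prod_nonneg fun k _ => hl k)
  linarith

lemma pow_pow_card_mul_le_prod_one_add_mul_pow (hl : ∀ k, 0 ≤ l k) (hP : 1 ≤ ∏ k, l k)
    {c : ℝ} (hc : 1 ≤ c) (i : ι) :
    (c ^ (Fintype.card ι - 1)) ^ Fintype.card ι * l i ≤ (∏ k, (1 + c * l k)) ^ Fintype.card ι := by
  obtain ⟨j, -, hj⟩ := exists_min_image univ l ⟨i, mem_univ i⟩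
  set Q := ∏ k ∈ univ.erase j, l k
  have hQ : 0 ≤ Q := prod_nonneg fun k _ => hl k
  have hsum : c ^ (Fintype.card ι - 1) * (Q + ∏ k, l k) ≤ ∏ k, (1 + c * l k) := by
    refine le_trans ?_ (pow_mul_prod_erase_add_pow_mul_prod_le hl (by linarith) j)
    have hpow : c ^ (Fintype.card ι - 1) ≤ c ^ Fintype.card ι :=
      pow_le_pow_right₀ hc (Nat.sub_le _ _)
    rw [mul_add]
    exact add_le_add_right (mul_le_mul_of_nonneg_right hpow (zero_le_one.trans hP)) _
  calc (c ^ (Fintype.card ι - 1)) ^ Fintype.card ι * l i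
      ≤ (c ^ (Fintype.card ι - 1)) ^ Fintype.card ι * (Q + ∏ k, l k) ^ Fintype.card ι := by
        gcongr
        exact le_prod_erase_add_prod_pow hl hP i fun k => hj k (mem_univ k)
    _ = (c ^ (Fintype.card ι - 1) * (Q + ∏ k, l k)) ^ Fintype.card ι := (mul_pow _ _ _).symm
    _ ≤ (∏ k, (1 + c * l k)) ^ Fintype.card ι := by gcongr

lemma sum_mul_pow_pow_card_le_card_mul_prod_one_add_mul_pow (hl : ∀ k, 0 ≤ l k)
    (hP : 1 ≤ ∏ k, l k) {c : ℝ} (hc : 1 ≤ c) :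
    (∑ k, l k) * (c ^ (Fintype.card ι - 1)) ^ Fintype.card ι ≤
      Fintype.card ι * (∏ k, (1 + c * l k)) ^ Fintype.card ι := by
  rw [sum_mul, ← nsmul_eq_mul, ← card_univ, ← sum_const]
  exact sum_le_sum fun i _ => by
    rw [mul_comm]; exact pow_pow_card_mul_le_prod_one_add_mul_pow hl hP hc i

end ProdOneAddMul

lemma rpow_mul_le_rpow_of_pow_mul_le {n : ℕ} (hn : 0 < n) {c D P S m a : ℝ} (hc : 1 ≤ c)
    (hP : 0 ≤ P) (hS : 0 ≤ S) (ha : 0 ≤ a) (ha1 : a ≤ 1) (ham : a ≤ m) (hDP : c ^ n * P ≤ D)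
    (hDS : S * (c ^ (n - 1)) ^ n ≤ n * D ^ n) :
    c ^ ((n : ℝ) * m - 1) * (P ^ (m - a) * (S / n) ^ (a / n)) ≤ D ^ m := by
  -- `a ≤ 1` is what limits the loss in the power of `c` to a single factor.
  have hc0 : 0 < c := zero_lt_one.trans_le hc
  have hn0 : (0 : ℝ) < n := Nat.cast_pos.mpr hn
  have hD : 0 ≤ D := (by positivity : 0 ≤ c ^ n * P).trans hDP
  have hP' : c ^ ((n : ℝ) * (m - a)) * P ^ (m - a) ≤ D ^ (m - a) := by
    rw [Real.rpow_natCast_mul hc0.le, ← Real.mul_rpow (by positivity) hP]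
    exact Real.rpow_le_rpow (by positivity) hDP (by linarith)
  have hS' : (c ^ (n - 1)) ^ a * (S / n) ^ (a / n) ≤ D ^ a := by
    have h : (c ^ (n - 1)) ^ n * (S / n) ≤ D ^ n := by
      rw [mul_div_assoc', div_le_iff₀ hn0]; linarith
    have hpow : ∀ x : ℝ, 0 ≤ x → (x ^ n) ^ (a / n) = x ^ a := fun x hx => by
      rw [← Real.rpow_natCast_mul hx, mul_div_cancel₀ _ hn0.ne']
    rw [← hpow _ (by positivity), ← hpow D hD, ← Real.mul_rpow (by positivity) (by positivity)]
    exact Real.rpow_le_rpow (by positivity) h (by positivity)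
  have hexp : (n : ℝ) * m - 1 ≤ n * (m - a) + (n - 1 : ℕ) * a := by
    rw [Nat.cast_pred hn]; nlinarith
  calc c ^ ((n : ℝ) * m - 1) * (P ^ (m - a) * (S / n) ^ (a / n))
      ≤ c ^ ((n : ℝ) * (m - a) + (n - 1 : ℕ) * a) * (P ^ (m - a) * (S / n) ^ (a / n)) := by
        gcongr
    _ = (c ^ ((n : ℝ) * (m - a)) * P ^ (m - a)) * ((c ^ (n - 1)) ^ a * (S / n) ^ (a / n)) := by
        rw [Real.rpow_add hc0, Real.rpow_natCast_mul hc0.le (n - 1) a]; ring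
    _ ≤ D ^ (m - a) * D ^ a := mul_le_mul hP' hS' (by positivity) (by positivity)
    _ = D ^ m := by rw [← Real.rpow_add_of_nonneg hD (by linarith) ha, sub_add_cancel]

section DiagonalMatrix

variable {ι : Type*} [Fintype ι] [DecidableEq ι]

lemma diagonal_mul_conjTranspose_self (d : ι → ℂ) :
    diagonal d * (diagonal d)ᴴ = diagonal fun i => ((Complex.normSq (d i) : ℝ) : ℂ) := by
  rw [diagonal_conjTranspose, diagonal_mul_diagonal]
  exact congrArg diagonal (funext fun i => Complex.mul_conj (d i))

lemma norm_det_diagonal_mul_conjTranspose_self (d : ι → ℂ) :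
    ‖(diagonal d * (diagonal d)ᴴ).det‖ = ∏ i, Complex.normSq (d i) := by
  rw [diagonal_mul_conjTranspose_self, det_diagonal, ← Complex.ofReal_prod, Complex.norm_real,
    Real.norm_of_nonneg (prod_nonneg fun i _ => Complex.normSq_nonneg _)]

lemma re_det_one_add_smul_diagonal_mul_conjTranspose_self (d : ι → ℂ) (c : ℝ) :
    ((1 : Matrix ι ι ℂ) + (c : ℂ) • (diagonal d * (diagonal d)ᴴ)).det.re =
      ∏ i, (1 + c * Complex.normSq (d i)) := by
  rw [diagonal_mul_conjTranspose_self, ← diagonal_one, ← diagonal_smul, diagonal_add,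
    det_diagonal]
  simp only [Pi.smul_apply, smul_eq_mul]
  norm_cast

end DiagonalMatrix

lemma frobNorm_nonneg {n T : ℕ} (X : Matrix (Fin n) (Fin T) ℂ) : 0 ≤ frobNorm X :=
  Real.sqrt_nonneg _

lemma frobNorm_sq_diagonal {n : ℕ} (d : Fin n → ℂ) :
    frobNorm (diagonal d) ^ 2 = ∑ i, Complex.normSq (d i) := by
  rw [frobNorm, diagonal_mul_conjTranspose_self, trace_diagonal, ← Complex.ofReal_sum,
    Complex.ofReal_re, Real.sq_sqrt (sum_nonneg fun i _ => Complex.normSq_nonneg _)]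

lemma one_le_frobNorm_of_isDiag {n : ℕ} (hn : 0 < n) {X : Matrix (Fin n) (Fin n) ℂ}
    (hX : X.IsDiag) (hdet : 1 ≤ ‖(X * Xᴴ).det‖) : 1 ≤ frobNorm X := by
  have : Nonempty (Fin n) := ⟨⟨0, hn⟩⟩
  rw [← hX.diagonal_diag, norm_det_diagonal_mul_conjTranspose_self] at hdet
  rw [← hX.diagonal_diag, ← one_le_pow_iff_of_nonneg (frobNorm_nonneg _) two_ne_zero,
    frobNorm_sq_diagonal]
  exact one_le_sum_of_one_le_prod (fun i => Complex.normSq_nonneg _) hdet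

lemma one_div_re_det_one_add_smul_rpow_le {n : ℕ} (hn : 0 < n) {X : Matrix (Fin n) (Fin n) ℂ}
    (hX : X.IsDiag) (hdet : 1 ≤ ‖(X * Xᴴ).det‖) {c m a : ℝ} (hc : 1 ≤ c) (ha : 0 ≤ a)
    (ha1 : a ≤ 1) (ham : a ≤ m) :
    1 / ((1 : Matrix (Fin n) (Fin n) ℂ) + (c : ℂ) • (X * Xᴴ)).det.re ^ m ≤
      c ^ (1 - (n : ℝ) * m) *
        (1 / ‖(X * Xᴴ).det‖ ^ (m - a) * ((n : ℝ) ^ (a / n) / frobNorm X ^ (2 * (a / n)))) := by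
  have : Nonempty (Fin n) := ⟨⟨0, hn⟩⟩
  rw [← hX.diagonal_diag] at hdet ⊢
  rw [norm_det_diagonal_mul_conjTranspose_self] at hdet ⊢
  rw [re_det_one_add_smul_diagonal_mul_conjTranspose_self, Real.rpow_mul (frobNorm_nonneg _),
    Real.rpow_two, frobNorm_sq_diagonal]
  set l := fun i => Complex.normSq (X.diag i)
  have hl : ∀ i, 0 ≤ l i := fun i => Complex.normSq_nonneg _
  have hS : 1 ≤ ∑ i, l i := one_le_sum_of_one_le_prod hl hdet
  have key := rpow_mul_le_rpow_of_pow_mul_le hn hc (zero_le_one.trans hdet) (zero_le_one.trans hS)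
    ha ha1 ham (by simpa using pow_card_mul_prod_le_prod_one_add_mul hl (zero_le_one.trans hc))
    (by simpa using sum_mul_pow_pow_card_le_card_mul_prod_one_add_mul_pow hl hdet hc)
  refine (one_div_le_one_div_of_le (by positivity) key).trans_eq ?_
  have hn0 : (0 : ℝ) < n := Nat.cast_pos.mpr hn
  rw [Real.div_rpow (zero_le_one.trans hS) hn0.le,
    show 1 - (n : ℝ) * m = -((n : ℝ) * m - 1) by ring, Real.rpow_neg (zero_le_one.trans hc)]
  field_simp

lemma sum_one_div_re_det_one_add_smul_rpow_le {n : ℕ} (hn : 0 < n)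
    {s : Finset (Matrix (Fin n) (Fin n) ℂ)} (hdiag : ∀ X ∈ s, X.IsDiag)
    (hdet : ∀ X ∈ s, 1 ≤ ‖(X * Xᴴ).det‖) {c m a K : ℝ} {p : ℕ} (hc : 1 ≤ c) (ha : 0 < a)
    (ha1 : a ≤ 1) (ham : a ≤ m) (hK : 0 ≤ K)
    (hpart : ∀ M : ℝ, 2 ≤ M →
      ∑ X ∈ s with frobNorm X ≤ M, 1 / ‖(X * Xᴴ).det‖ ^ (m - a) ≤ K * Real.log M ^ p) :
    ∑ X ∈ s, 1 / ((1 : Matrix (Fin n) (Fin n) ℂ) + (c : ℂ) • (X * Xᴴ)).det.re ^ m ≤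
      (n : ℝ) ^ (a / n) * K * dyadicLogSeries (2 * (a / n)) p * c ^ (1 - (n : ℝ) * m) := by
  calc ∑ X ∈ s, 1 / ((1 : Matrix (Fin n) (Fin n) ℂ) + (c : ℂ) • (X * Xᴴ)).det.re ^ m
      ≤ ∑ X ∈ s, c ^ (1 - (n : ℝ) * m) * (1 / ‖(X * Xᴴ).det‖ ^ (m - a) *
          ((n : ℝ) ^ (a / n) / frobNorm X ^ (2 * (a / n)))) :=
        sum_le_sum fun X hX =>
          one_div_re_det_one_add_smul_rpow_le hn (hdiag X hX) (hdet X hX) hc ha.le ha1 ham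
    _ = c ^ (1 - (n : ℝ) * m) * ∑ X ∈ s, 1 / ‖(X * Xᴴ).det‖ ^ (m - a) *
          ((n : ℝ) ^ (a / n) / frobNorm X ^ (2 * (a / n))) := (mul_sum _ _ _).symm
    _ ≤ c ^ (1 - (n : ℝ) * m) * ((n : ℝ) ^ (a / n) * K * dyadicLogSeries (2 * (a / n)) p) := by
        gcongr
        exact sum_mul_le_of_sum_le_mul_log_pow s (by positivity) (by positivity) hK
          (fun X _ => by positivity)
          (fun X hX => one_le_frobNorm_of_isDiag hn (hdiag X hX) (hdet X hX)) (fun X _ => le_rfl)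
          hpart
    _ = _ := mul_comm _ _

theorem stmt13 (n : ℕ) (hn : 0 < n)
    (b : Fin (2 * n) → Matrix (Fin n) (Fin n) ℂ)
    (hb : LinearIndependent ℝ b)
    (L : Set (Matrix (Fin n) (Fin n) ℂ))
    (hL : ∀ X, X ∈ L ↔ X ∈ Submodule.span ℤ (Set.range b))
    (hdiag : ∀ X ∈ L, X.IsDiag)
    (hdet : ∀ X ∈ L, X ≠ 0 → 1 ≤ ‖(X * Xᴴ).det‖)
    (hsum : ∀ m : ℝ, 1 ≤ m → ∃ K : ℝ, ∀ M : ℝ, 2 ≤ M →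
      ∑' X : {X : Matrix (Fin n) (Fin n) ℂ // X ∈ L ∧ X ≠ 0 ∧ frobNorm X ≤ M},
          1 / ‖(X.1 * X.1ᴴ).det‖ ^ m
        ≤ K * Real.log M ^ (3 * n - 1)) :
    ∀ m : ℝ, 1 < m → ∃ K' : ℝ, ∀ c : ℝ, 1 ≤ c → ∀ M : ℝ,
      ∑' X : {X : Matrix (Fin n) (Fin n) ℂ // X ∈ L ∧ X ≠ 0 ∧ frobNorm X ≤ M},
          1 / (((1 : Matrix (Fin n) (Fin n) ℂ) + (c : ℂ) • (X.1 * X.1ᴴ)).det).re ^ m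
        ≤ K' * c ^ (1 - (n : ℝ) * m) := by
  intro m hm
  -- `a ≤ m - 1` keeps the exponent `m - a` in the range `1 ≤ m - a` where `hsum` applies.
  set a := min (m - 1) 1
  have ha : 0 < a := lt_min (by linarith) one_pos
  have hma : 1 ≤ m - a := by linarith [min_le_left (m - 1) 1]
  obtain ⟨K, hK⟩ := hsum (m - a) hma
  have hK0 : 0 ≤ K := nonneg_of_mul_nonneg_left
    ((tsum_nonneg fun X => by positivity).trans (hK 2 le_rfl)) (pow_pos (Real.log_pos one_lt_two) _)
  -- Without finiteness the `tsum` in `hsum` could be the junk value `0`.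
  have hfin : ∀ M, {X | X ∈ L ∧ X ≠ 0 ∧ frobNorm X ≤ M}.Finite := fun M =>
    (finite_setOf_mem_span_int_frobNorm_le hb M).subset fun X ⟨hXL, _, hXM⟩ => ⟨(hL X).mp hXL, hXM⟩
  refine ⟨(n : ℝ) ^ (a / n) * K * dyadicLogSeries (2 * (a / n)) (3 * n - 1), fun c hc M => ?_⟩
  have hseries := dyadicLogSeries_nonneg (2 * (a / n)) (3 * n - 1)
  refine tsum_le_of_sum_le' (by positivity) fun t => ?_
  have hs : ∀ X ∈ t.image Subtype.val, X ∈ L ∧ X ≠ 0 := fun X hX => by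
    obtain ⟨Y, -, rfl⟩ := mem_image.mp hX
    exact ⟨Y.2.1, Y.2.2.1⟩
  calc ∑ X ∈ t, 1 / ((1 : Matrix (Fin n) (Fin n) ℂ) + (c : ℂ) • (X.1 * X.1ᴴ)).det.re ^ m
      = ∑ X ∈ t.image Subtype.val,
          1 / ((1 : Matrix (Fin n) (Fin n) ℂ) + (c : ℂ) • (X * Xᴴ)).det.re ^ m := by
        rw [sum_image Subtype.val_injective.injOn]
    _ ≤ _ := sum_one_div_re_det_one_add_smul_rpow_le hn (fun X hX => hdiag X (hs X hX).1)
        (fun X hX => hdet X (hs X hX).1 (hs X hX).2) hc ha (min_le_right _ _) (by linarith) hK0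
        fun M' hM' => (sum_le_tsum_subtype (hfin M') (fun X _ => by positivity) fun X hX =>
          have ⟨hXs, hXM⟩ := mem_filter.mp hX
          ⟨(hs X hXs).1, (hs X hXs).2, hXM⟩).trans (hK M' hM')
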